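/- Let A, B be bounded operators on a complex Hilbert space with AB = λBA ≠ 0 for a complex scalar λ. If A is hyponormal and invertible and B is quasi *-paranormal, then |λ| = 1. -/

import Mathlib

/-!
Conjugating by `A` turns `B ^ n` into `λ ^ n • B ^ n`, so whenever `B ^ n ≠ 0` both `‖λ‖ ^ n` and
`‖λ‖⁻¹ ^ n` are at most `‖A‖ * ‖A⁻¹‖`, which forces `‖λ‖ = 1`. Quasi *-paranormality gives
`ker B³ ⊆ ker B†B = ker B`, hence `ker Bⁿ = ker B` for all `n ≥ 1`, so `B ≠ 0` is not nilpotent.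
-/

open ContinuousLinearMap

lemma le_one_of_forall_pow_le {t C : ℝ} (h : ∀ n : ℕ, t ^ n ≤ C) : t ≤ 1 := by
  by_contra! ht
  obtain ⟨n, hn⟩ := pow_unbounded_of_one_lt C ht
  exact (h n).not_gt hn

section SemiconjBy

variable {𝕜 R : Type*} [NormedField 𝕜] [NormedRing R] [NormedAlgebra 𝕜 R]

lemma norm_le_of_semiconjBy_smul {u : Rˣ} {x : R} {μ : 𝕜} (h : SemiconjBy (u : R) x (μ • x))
    (hx : x ≠ 0) : ‖μ‖ ≤ ‖(u : R)‖ * ‖(↑u⁻¹ : R)‖ := by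
  have hconj : μ • x = u * x * ↑u⁻¹ := (Units.eq_mul_inv_iff_mul_eq u).mpr h.eq.symm
  have hx' : 0 < ‖x‖ := norm_pos_iff.mpr hx
  refine le_of_mul_le_mul_right ?_ hx'
  calc ‖μ‖ * ‖x‖ = ‖(u : R) * x * ↑u⁻¹‖ := by rw [← hconj, norm_smul]
    _ ≤ ‖(u : R)‖ * ‖x‖ * ‖(↑u⁻¹ : R)‖ := norm_mul₃_le
    _ = ‖(u : R)‖ * ‖(↑u⁻¹ : R)‖ * ‖x‖ := by ring

lemma norm_eq_one_of_semiconjBy_smul {u : Rˣ} {b : R} {μ : 𝕜} (h : SemiconjBy (u : R) b (μ • b))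
    (hb : ¬IsNilpotent b) : ‖μ‖ = 1 := by
  have hbn (n : ℕ) : b ^ n ≠ 0 := fun h0 => hb ⟨n, h0⟩
  have hμ : μ ≠ 0 := by
    rintro rfl
    rw [SemiconjBy, zero_smul, zero_mul, Units.mul_right_eq_zero] at h
    exact hbn 1 (by rw [pow_one, h])
  have hpow (n : ℕ) : SemiconjBy (u : R) (b ^ n) (μ ^ n • b ^ n) := by
    simpa only [smul_pow] using h.pow_right n
  have hpow_inv (n : ℕ) : SemiconjBy (↑u⁻¹ : R) (b ^ n) (μ⁻¹ ^ n • b ^ n) := by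
    simpa only [inv_pow, inv_smul_smul₀ (pow_ne_zero n hμ)] using
      (hpow n).units_inv_symm_left.smul_right (μ ^ n)⁻¹
  have hle : ‖μ‖ ≤ 1 := le_one_of_forall_pow_le fun n => by
    simpa only [norm_pow] using norm_le_of_semiconjBy_smul (hpow n) (hbn n)
  have hle_inv : ‖μ‖⁻¹ ≤ 1 := le_one_of_forall_pow_le fun n => by
    simpa only [norm_pow, norm_inv, inv_inv, mul_comm ‖(u : R)‖] using
      norm_le_of_semiconjBy_smul (hpow_inv n) (hbn n)
  exact le_antisymm hle (inv_le_one₀ (norm_pos_iff.mpr hμ) |>.mp hle_inv)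

end SemiconjBy

section QuasiStarParanormal

variable {𝕜 E : Type*} [RCLike 𝕜] [NormedAddCommGroup E] [InnerProductSpace 𝕜 E] [CompleteSpace E]

def IsQuasiStarParanormal (B : E →L[𝕜] E) : Prop :=
  ∀ x : E, ‖adjoint B (B x)‖ ^ 2 ≤ ‖(B ^ 3) x‖ * ‖B x‖

namespace IsQuasiStarParanormal

variable {B : E →L[𝕜] E}

lemma apply_eq_zero_of_sq_apply_eq_zero (hB : IsQuasiStarParanormal B) {x : E}
    (hx : (B ^ 2) x = 0) : B x = 0 := by
  have hcube : (B ^ 3) x = 0 := by rw [pow_succ', mul_apply_eq_comp, hx, map_zero]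
  have hBstarB : adjoint B (B x) = 0 := by
    have h := hB x
    rw [hcube, norm_zero, zero_mul] at h
    exact norm_eq_zero.mp (pow_eq_zero_iff two_ne_zero |>.mp (le_antisymm h (sq_nonneg _)))
  have hker : x ∈ (adjoint B ∘L B).ker := hBstarB
  rwa [ker_adjoint_comp_self] at hker

lemma apply_eq_zero_of_pow_succ_apply_eq_zero (hB : IsQuasiStarParanormal B) {x : E} :
    ∀ n : ℕ, (B ^ (n + 1)) x = 0 → B x = 0
  | 0, hx => by rwa [pow_one] at hx
  | n + 1, hx => by
    refine hB.apply_eq_zero_of_pow_succ_apply_eq_zero n ?_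
    have hsq : (B ^ 2) ((B ^ n) x) = 0 := by rwa [← mul_apply_eq_comp, ← pow_add, add_comm]
    rw [pow_succ', mul_apply_eq_comp, hB.apply_eq_zero_of_sq_apply_eq_zero hsq]

lemma eq_zero_of_isNilpotent (hB : IsQuasiStarParanormal B) (hnil : IsNilpotent B) : B = 0 := by
  obtain ⟨n, hn⟩ := hnil
  cases n with
  | zero => rw [pow_zero] at hn; rw [← mul_one B, hn, mul_zero]
  | succ n => ext x; exact hB.apply_eq_zero_of_pow_succ_apply_eq_zero n (by rw [hn, zero_apply])

end IsQuasiStarParanormal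

end QuasiStarParanormal

theorem lambda_commute_hyponormal_invertible_general
    {H : Type*} [NormedAddCommGroup H] [InnerProductSpace ℂ H] [CompleteSpace H]
    (A B : H →L[ℂ] H) (lam : ℂ)
    (hcomm : A * B = lam • (B * A)) (hne : A * B ≠ 0)
    (hAinv : IsUnit A)
    (hB : ∀ x : H, ‖(ContinuousLinearMap.adjoint B) (B x)‖ ^ 2 ≤ ‖(B ^ 3) x‖ * ‖B x‖) :
    ‖lam‖ = 1 := by
  obtain ⟨u, rfl⟩ := hAinv
  have hB0 : B ≠ 0 := by
    rintro rfl
    exact hne (mul_zero _)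
  have hsemiconj : SemiconjBy (u : H →L[ℂ] H) B (lam • B) := by
    rw [SemiconjBy, hcomm, smul_mul_assoc]
  exact norm_eq_one_of_semiconjBy_smul hsemiconj fun hnil =>
    hB0 (IsQuasiStarParanormal.eq_zero_of_isNilpotent hB hnil)

theorem lambda_commute_hyponormal_invertible
    {H : Type*} [NormedAddCommGroup H] [InnerProductSpace ℂ H] [CompleteSpace H]
    (A B : H →L[ℂ] H) (lam : ℂ)
    (hcomm : A * B = lam • (B * A)) (hne : A * B ≠ 0)
    (hA : ∀ x : H, ‖(ContinuousLinearMap.adjoint A) x‖ ≤ ‖A x‖)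
    (hAinv : IsUnit A)
    (hB : ∀ x : H, ‖(ContinuousLinearMap.adjoint B) (B x)‖ ^ 2 ≤ ‖(B ^ 3) x‖ * ‖B x‖) :
    ‖lam‖ = 1 :=
  lambda_commute_hyponormal_invertible_general A B lam hcomm hne hAinv hB
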